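/- arXiv:1108.2878 — 2 statements merged into one kernel-verified Lean document; each statement's English description precedes it below -/
import Mathlib

section
/- Let M be a regular irreducible algebraic monoid in M_n(ℂ), let a ∈ M, and let b ∈ D_a^M. Then: (1) 𝖦_a^l = {rng(x) : x ∈ R_b^M}; (2) 𝖦_a^r = {nul(x) : x ∈ L_b^M}. -/
open Matrix

/-- `Mn n` is the multiplicative monoid of `n × n` complex matrices. -/
abbrev Mn (n : ℕ) : Type := Matrix (Fin n) (Fin n) ℂ

/-- A subset of `Mn n` is algebraic if it is the common zero set of a family of
polynomials in the `n²` matrix entries. -/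
def IsAlgebraicMatrixSet {n : ℕ} (X : Set (Mn n)) : Prop :=
  ∃ s : Set (MvPolynomial (Fin n × Fin n) ℂ),
    X = {x | ∀ p ∈ s, MvPolynomial.eval (fun ij => x ij.1 ij.2) p = 0}

/-- `M` is a regular irreducible algebraic monoid in `Mn n`. -/
structure IsRegIrrAlgMonoid {n : ℕ} (M : Set (Mn n)) : Prop where
  one_mem : (1 : Mn n) ∈ M
  mul_mem : ∀ a ∈ M, ∀ b ∈ M, a * b ∈ M
  algebraic : IsAlgebraicMatrixSet M
  regular : ∀ a ∈ M, ∃ x ∈ M, a * x * a = a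
  irreducible : ¬ ∃ A B : Set (Mn n), IsAlgebraicMatrixSet A ∧ IsAlgebraicMatrixSet B ∧
      A ∪ B = M ∧ A ≠ M ∧ B ≠ M

/-- The group of units of the monoid `M` (as a subset of `Mn n`). -/
def unitsOf {n : ℕ} (M : Set (Mn n)) : Set (Mn n) :=
  {u | u ∈ M ∧ ∃ v ∈ M, u * v = 1 ∧ v * u = 1}

def lSet {n : ℕ} (S : Set (Mn n)) (a : Mn n) : Set (Mn n) := {y | ∃ x ∈ S, y = x * a}
def rSet {n : ℕ} (S : Set (Mn n)) (a : Mn n) : Set (Mn n) := {y | ∃ x ∈ S, y = a * x}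
def jSet {n : ℕ} (S : Set (Mn n)) (a : Mn n) : Set (Mn n) :=
  {y | ∃ x ∈ S, ∃ z ∈ S, y = x * a * z}

/-- Green's relation 𝓛 in the monoid `S`: `a 𝓛 b` iff `Sa = Sb`. -/
def GreenL {n : ℕ} (S : Set (Mn n)) (a b : Mn n) : Prop := lSet S a = lSet S b
/-- Green's relation 𝓡 in the monoid `S`: `a 𝓡 b` iff `aS = bS`. -/
def GreenR {n : ℕ} (S : Set (Mn n)) (a b : Mn n) : Prop := rSet S a = rSet S b
/-- Green's relation 𝓓: `a 𝓓 b` iff there is `c ∈ S` with `a 𝓛 c` and `c 𝓡 b`. -/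
def GreenD {n : ℕ} (S : Set (Mn n)) (a b : Mn n) : Prop :=
  ∃ c ∈ S, GreenL S a c ∧ GreenR S c b
/-- Green's relation 𝓙: `a 𝓙 b` iff `SaS = SbS`. -/
def GreenJ {n : ℕ} (S : Set (Mn n)) (a b : Mn n) : Prop := jSet S a = jSet S b

def LClass {n : ℕ} (S : Set (Mn n)) (a : Mn n) : Set (Mn n) := {b ∈ S | GreenL S a b}
def RClass {n : ℕ} (S : Set (Mn n)) (a : Mn n) : Set (Mn n) := {b ∈ S | GreenR S a b}
def DClass {n : ℕ} (S : Set (Mn n)) (a : Mn n) : Set (Mn n) := {b ∈ S | GreenD S a b}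
def JClass {n : ℕ} (S : Set (Mn n)) (a : Mn n) : Set (Mn n) := {b ∈ S | GreenJ S a b}

/-- The set of idempotents in a subset `T`. -/
def idem {n : ℕ} (T : Set (Mn n)) : Set (Mn n) := {x ∈ T | x * x = x}

/-- `rng x` : the row space of `x`, i.e. the image of the linear map `v ↦ v ᵥ* x`
on row vectors (equivalently, the range of `xᵀ *ᵥ ·`). -/
noncomputable def rng {n : ℕ} (x : Mn n) : Submodule ℂ (Fin n → ℂ) :=
  LinearMap.range xᵀ.mulVecLin

/-- `nul x` : the left null space `{v : v ᵥ* x = 0}` of `x`. -/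
noncomputable def nul {n : ℕ} (x : Mn n) : Submodule ℂ (Fin n → ℂ) :=
  LinearMap.ker xᵀ.mulVecLin

section Helpers

variable {n : ℕ} {S : Set (Mn n)}

lemma greenL_of_dvd (hS : ∀ a ∈ S, ∀ b ∈ S, a * b ∈ S) {a b u v : Mn n}
    (hu : u ∈ S) (hv : v ∈ S) (hab : a = u * b) (hba : b = v * a) :
    GreenL S a b := by
  ext y
  constructor
  · rintro ⟨x, hx, rfl⟩
    exact ⟨x * u, hS x hx u hu, by rw [hab, mul_assoc]⟩
  · rintro ⟨x, hx, rfl⟩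
    exact ⟨x * v, hS x hx v hv, by rw [hba, mul_assoc]⟩

lemma greenR_of_dvd (hS : ∀ a ∈ S, ∀ b ∈ S, a * b ∈ S) {a b u v : Mn n}
    (hu : u ∈ S) (hv : v ∈ S) (hab : a = b * u) (hba : b = a * v) :
    GreenR S a b := by
  ext y
  constructor
  · rintro ⟨x, hx, rfl⟩
    exact ⟨u * x, hS u hu x hx, by rw [hab, mul_assoc]⟩
  · rintro ⟨x, hx, rfl⟩
    exact ⟨v * x, hS v hv x hx, by rw [hba, mul_assoc]⟩

lemma greenL_dvd (h1 : (1 : Mn n) ∈ S) {a b : Mn n} (h : GreenL S a b) :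
    ∃ u ∈ S, a = u * b := by
  have : a ∈ lSet S b := by rw [← h]; exact ⟨1, h1, (one_mul a).symm⟩
  obtain ⟨u, hu, hh⟩ := this
  exact ⟨u, hu, hh⟩

lemma greenR_dvd (h1 : (1 : Mn n) ∈ S) {a b : Mn n} (h : GreenR S a b) :
    ∃ u ∈ S, a = b * u := by
  have : a ∈ rSet S b := by rw [← h]; exact ⟨1, h1, (mul_one a).symm⟩
  obtain ⟨u, hu, hh⟩ := this
  exact ⟨u, hu, hh⟩

/-- L and R commute: if `a 𝓛 c` and `c 𝓡 b` then there is `d` with `a 𝓡 d` and `d 𝓛 b`. -/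
lemma LR_comm (h1 : (1 : Mn n) ∈ S) (hS : ∀ a ∈ S, ∀ b ∈ S, a * b ∈ S)
    {a c b : Mn n} (hac : GreenL S a c) (hcb : GreenR S c b) (ha : a ∈ S) :
    ∃ d ∈ S, GreenR S a d ∧ GreenL S d b := by
  obtain ⟨u', hu', hau'⟩ := greenL_dvd h1 hac          -- a = u' * c
  obtain ⟨u, hu, hcu⟩ := greenL_dvd h1 hac.symm        -- c = u * a
  obtain ⟨v', hv', hcv'⟩ := greenR_dvd h1 hcb          -- c = b * v'
  obtain ⟨v, hv, hbv⟩ := greenR_dvd h1 hcb.symm        -- b = c * v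
  refine ⟨a * v, hS a ha v hv, ?_, ?_⟩
  · refine greenR_of_dvd hS hv' hv ?_ rfl
    -- a = (a * v) * v'
    have hc : c = c * v * v' := by rw [← hbv, ← hcv']
    calc a = u' * c := hau'
      _ = u' * (c * v * v') := by rw [← hc]
      _ = (u' * c) * v * v' := by simp only [mul_assoc]
      _ = a * v * v' := by rw [← hau']
  · refine greenL_of_dvd hS hu' hu ?_ ?_
    · -- a * v = u' * b
      rw [hbv, hau', mul_assoc]
    · -- b = u * (a * v)
      rw [hbv, hcu]
      simp only [mul_assoc]

/-- R and L commute: if `a 𝓡 c` and `c 𝓛 b` then there is `d` with `a 𝓛 d` and `d 𝓡 b`. -/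
lemma RL_comm (h1 : (1 : Mn n) ∈ S) (hS : ∀ a ∈ S, ∀ b ∈ S, a * b ∈ S)
    {a c b : Mn n} (hac : GreenR S a c) (hcb : GreenL S c b) (ha : a ∈ S) :
    ∃ d ∈ S, GreenL S a d ∧ GreenR S d b := by
  obtain ⟨u', hu', hau'⟩ := greenR_dvd h1 hac          -- a = c * u'
  obtain ⟨u, hu, hcu⟩ := greenR_dvd h1 hac.symm        -- c = a * u
  obtain ⟨v', hv', hcv'⟩ := greenL_dvd h1 hcb          -- c = v' * b
  obtain ⟨v, hv, hbv⟩ := greenL_dvd h1 hcb.symm        -- b = v * c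
  refine ⟨v * a, hS v hv a ha, ?_, ?_⟩
  · refine greenL_of_dvd hS hv' hv ?_ rfl
    have hc : c = v' * (v * c) := by rw [← hbv, ← hcv']
    calc a = c * u' := hau'
      _ = (v' * (v * c)) * u' := by rw [← hc]
      _ = v' * (v * (c * u')) := by simp only [mul_assoc]
      _ = v' * (v * a) := by rw [← hau']
  · refine greenR_of_dvd hS hu' hu ?_ ?_
    · rw [hbv, hau']; simp only [mul_assoc]
    · rw [hbv, hcu]; simp only [mul_assoc]

lemma rng_mul_le (u b : Mn n) : rng (u * b) ≤ rng b := by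
  unfold rng
  rw [Matrix.transpose_mul, Matrix.mulVecLin_mul]
  exact LinearMap.range_comp_le_range _ _

lemma rng_eq_of_greenL (h1 : (1 : Mn n) ∈ S) {a b : Mn n} (h : GreenL S a b) :
    rng a = rng b := by
  obtain ⟨u, _, hu⟩ := greenL_dvd h1 h
  obtain ⟨v, _, hv⟩ := greenL_dvd h1 h.symm
  exact le_antisymm (hu ▸ rng_mul_le u b) (hv ▸ rng_mul_le v a)

lemma nul_mul_le (a v : Mn n) : nul a ≤ nul (a * v) := by
  unfold nul
  rw [Matrix.transpose_mul, Matrix.mulVecLin_mul]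
  exact LinearMap.ker_le_ker_comp _ _

lemma nul_eq_of_greenR (h1 : (1 : Mn n) ∈ S) {a b : Mn n} (h : GreenR S a b) :
    nul a = nul b := by
  obtain ⟨u, _, hu⟩ := greenR_dvd h1 h
  obtain ⟨v, _, hv⟩ := greenR_dvd h1 h.symm
  exact le_antisymm (by rw [hv]; exact nul_mul_le a v) (by rw [hu]; exact nul_mul_le b u)

end Helpers

/-- If `b ∈ D_a^M` then `𝖦_a^l = {rng x : x ∈ R_b^M}` and
`𝖦_a^r = {nul x : x ∈ L_b^M}`, where `𝖦_a^l = {rng x : x ∈ D_a^M}` and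
`𝖦_a^r = {nul x : x ∈ D_a^M}`. -/
theorem stmt_7 {n : ℕ} (M : Set (Mn n)) (hM : IsRegIrrAlgMonoid M)
    (a : Mn n) (ha : a ∈ M) (b : Mn n) (hb : b ∈ DClass M a) :
    rng '' DClass M a = rng '' RClass M b ∧
    nul '' DClass M a = nul '' LClass M b := by
  obtain ⟨hbM, hDab⟩ := hb
  have h1 : (1 : Mn n) ∈ M := hM.one_mem
  have hS : ∀ a ∈ M, ∀ b ∈ M, a * b ∈ M := hM.mul_mem
  -- D is symmetric (given left element in M) and composable
  have symmD : ∀ x y : Mn n, x ∈ M → GreenD M x y → GreenD M y x := by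
    intro x y hx ⟨c, hc, hL, hR⟩
    obtain ⟨d, hd, hR', hL'⟩ := LR_comm h1 hS hL hR hx
    exact ⟨d, hd, hL'.symm, hR'.symm⟩
  have transD : ∀ x y z : Mn n, GreenD M x y → GreenD M y z → GreenD M x z := by
    intro x y z ⟨c, hc, hL, hR⟩ ⟨c', hc', hL', hR'⟩
    obtain ⟨d, hd, hLd, hRd⟩ := RL_comm h1 hS hR hL' hc
    exact ⟨d, hd, hL.trans hLd, hRd.trans hR'⟩
  constructor
  · apply le_antisymm
    · -- rng '' DClass M a ⊆ rng '' RClass M b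
      rintro _ ⟨x, ⟨hxM, hDax⟩, rfl⟩
      have hDxb : GreenD M x b := transD x a b (symmD a x ha hDax) hDab
      obtain ⟨e, he, hLxe, hReb⟩ := hDxb
      exact ⟨e, ⟨he, hReb.symm⟩, (rng_eq_of_greenL h1 hLxe).symm⟩
    · -- R_b ⊆ D_a
      apply Set.image_mono
      rintro x ⟨hxM, hRbx⟩
      obtain ⟨c, hc, hL, hR⟩ := hDab
      exact ⟨hxM, c, hc, hL, hR.trans hRbx⟩
  · apply le_antisymm
    · rintro _ ⟨x, ⟨hxM, hDax⟩, rfl⟩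
      have hDxb : GreenD M x b := transD x a b (symmD a x ha hDax) hDab
      obtain ⟨e, he, hLxe, hReb⟩ := hDxb
      obtain ⟨d, hd, hRxd, hLdb⟩ := LR_comm h1 hS hLxe hReb hxM
      exact ⟨d, ⟨hd, hLdb.symm⟩, (nul_eq_of_greenR h1 hRxd).symm⟩
    · apply Set.image_mono
      rintro x ⟨hxM, hLbx⟩
      obtain ⟨c, hc, hL, hR⟩ := hDab
      obtain ⟨d, hd, hLcd, hRdx⟩ := RL_comm h1 hS hR hLbx hc
      exact ⟨hxM, d, hd, hL.trans hLcd, hRdx⟩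
end

section
/- Let 1 ≤ k ≤ n−1. Then the map Γ_k : D_k → 𝖦_k defined by x ↦ rng(x) and the map Δ_k : D_k → 𝖦_{n−k} defined by x ↦ nul(x) are both continuous open surjections. -/
open Matrix

/-- The row space of a `k × n` matrix `P`: the span of its rows, i.e. the image of
the linear map `v ↦ v ᵥ* P` (equivalently `v ↦ Pᵀ *ᵥ v`). -/
noncomputable def rowSpace {k n : ℕ} (P : Matrix (Fin k) (Fin n) ℂ) : Submodule ℂ (Fin n → ℂ) :=
  LinearMap.range Pᵀ.mulVecLin

/-- Type synonym for the submodule lattice of `ℂⁿ`; the parameter `k` records which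
Grassmann quotient topology (coinduced from the rank-`k` `k × n` matrices via the
row-space map) the type carries. -/
def GrassModK (n k : ℕ) : Type := Submodule ℂ (Fin n → ℂ)

def toGrass {n : ℕ} (k : ℕ) (W : Submodule ℂ (Fin n → ℂ)) : GrassModK n k := W

def toSubmodule {n k : ℕ} (W : GrassModK n k) : Submodule ℂ (Fin n → ℂ) := W

/-- The Grassmann (quotient) topology: coinduced from the euclidean topology on the
space `M(k,n;k)` of rank-`k` `k × n` matrices by the row-space map `q`. -/
noncomputable instance grassTop (n k : ℕ) : TopologicalSpace (GrassModK n k) :=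
  TopologicalSpace.coinduced
    (fun P : {P : Matrix (Fin k) (Fin n) ℂ // P.rank = k} => toGrass k (rowSpace P.1))
    inferInstance

/-- `𝖦_k`, the set of `k`-dimensional subspaces of `ℂⁿ` (in its Grassmann-topologised
ambient type); it carries the subspace topology, which agrees with the quotient
topology induced by `q`. -/
def GrassSet (n k : ℕ) : Set (GrassModK n k) :=
  {W | Module.finrank ℂ ↥(toSubmodule W) = k}

/-!
The Grassmann topology is coinduced by the row-space map `q`, so a map into `𝖦_m` is continuous
as soon as it locally factors through `q` by a continuous map into full-rank matrices, and the
image of an open set is open as soon as every preimage point under `q` admits a continuous local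
section back into the open set. For `Γ_k` both are left multiplications: near `x₀`,
`rng x = rng (A x)` for a fixed `A` making `A x₀` of full rank, and `rng x = rng Q₀` forces
`x = C Q₀`, so `Q ↦ C Q` is a section. For `Δ_k` the (scaled) projector `1 - B (P B)⁻¹ P` onto
`ker P` plays the same role. In all cases the ranks come out right because rank is lower
semicontinuous while `P y = 0` forces `rank P + rank y ≤ n`.
-/

open Matrix Module Set Filter Topology
open scoped ComplexOrder

namespace Matrix

variable {K : Type*} [Field K] {m n : Type*} [Fintype n]

theorem rank_add_le (A B : Matrix m n K) : (A + B).rank ≤ A.rank + B.rank := by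
  rw [rank, rank, rank, mulVecLin_add]
  calc finrank K (LinearMap.range (A.mulVecLin + B.mulVecLin))
      ≤ finrank K ↥(LinearMap.range A.mulVecLin ⊔ LinearMap.range B.mulVecLin) :=
        Submodule.finrank_mono (LinearMap.range_add_le _ _)
    _ ≤ _ := Submodule.finrank_add_le_finrank_add_finrank _ _

theorem isOpen_setOf_le_rank [Fintype m] {𝕜 : Type*} [NontriviallyNormedField 𝕜] [CompleteSpace 𝕜]
    (r : ℕ) : IsOpen {A : Matrix m n 𝕜 | r ≤ A.rank} := by
  classical
  let Φ : Matrix m n 𝕜 →ₗ[𝕜] (n → 𝕜) →L[𝕜] (m → 𝕜) :=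
    LinearMap.toContinuousLinearMap.toLinearMap ∘ₗ Matrix.toLin'.toLinearMap
  convert (isOpen_setOfPred_nat_le_rank r).preimage Φ.continuous_of_finiteDimensional using 1
  ext A
  simp only [mem_ofPred_eq, mem_preimage, LinearMap.rank, Matrix.rank, ← Module.finrank_eq_rank,
    Nat.cast_le]
  rfl

theorem det_ne_zero_of_rank_eq [DecidableEq n] {M : Matrix n n K} (h : M.rank = Fintype.card n) :
    M.det ≠ 0 := by
  have hsurj : LinearMap.range M.mulVecLin = ⊤ :=
    Submodule.eq_top_of_finrank_eq (h.trans (Module.finrank_fintype_fun_eq_card K).symm)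
  exact isUnit_iff_ne_zero.mp ((isUnit_iff_isUnit_det M).mp
    (mulVec_surjective_iff_isUnit.mp (LinearMap.range_eq_top.mp hsurj)))

theorem rank_add_finrank_ker_transpose [Fintype m] (y : Matrix m n K) :
    y.rank + finrank K (LinearMap.ker yᵀ.mulVecLin) = Fintype.card m := by
  rw [← rank_transpose, rank, LinearMap.finrank_range_add_finrank_ker,
    Module.finrank_fintype_fun_eq_card]

theorem ker_transpose_mul_eq [Fintype m] {o : Type*} [Fintype o] {y : Matrix m n K}
    {B : Matrix n o K} (h : (y * B).rank = y.rank) :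
    LinearMap.ker (y * B)ᵀ.mulVecLin = LinearMap.ker yᵀ.mulVecLin := by
  refine (Submodule.eq_of_le_of_finrank_eq ?_ ?_).symm
  · rw [transpose_mul, mulVecLin_mul]
    exact LinearMap.ker_le_ker_comp _ _
  · have h1 := rank_add_finrank_ker_transpose y
    have h2 := rank_add_finrank_ker_transpose (y * B)
    omega

end Matrix

section RowSpace

variable {a b n : ℕ}

theorem rowSpace_eq_range_vecMulLinear (P : Matrix (Fin a) (Fin n) ℂ) :
    rowSpace P = LinearMap.range P.vecMulLinear := by
  rw [rowSpace]
  congr 1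
  ext v
  simp

theorem finrank_rowSpace (P : Matrix (Fin a) (Fin n) ℂ) : finrank ℂ (rowSpace P) = P.rank := by
  rw [← rank_transpose]
  rfl

theorem rowSpace_mul_le (C : Matrix (Fin b) (Fin a) ℂ) (P : Matrix (Fin a) (Fin n) ℂ) :
    rowSpace (C * P) ≤ rowSpace P := by
  rw [rowSpace, rowSpace, transpose_mul, mulVecLin_mul]
  exact LinearMap.range_comp_le_range _ _

theorem rowSpace_mul_eq {C : Matrix (Fin b) (Fin a) ℂ} {P : Matrix (Fin a) (Fin n) ℂ}
    (h : (C * P).rank = P.rank) : rowSpace (C * P) = rowSpace P :=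
  Submodule.eq_of_le_of_finrank_eq (rowSpace_mul_le C P) (by rw [finrank_rowSpace,
    finrank_rowSpace, h])

theorem exists_eq_mul_of_rowSpace_le {x : Matrix (Fin b) (Fin n) ℂ} {P : Matrix (Fin a) (Fin n) ℂ}
    (h : rowSpace x ≤ rowSpace P) : ∃ C : Matrix (Fin b) (Fin a) ℂ, x = C * P := by
  rw [rowSpace_eq_range_vecMulLinear, rowSpace_eq_range_vecMulLinear] at h
  have hrow : ∀ i, ∃ c, c ᵥ* P = x i := fun i ↦
    h ⟨Pi.single i 1, by rw [vecMulLinear_apply, single_one_vecMul]; rfl⟩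
  choose c hc using hrow
  exact ⟨Matrix.of c, by ext i j; rw [← hc]; rfl⟩

theorem exists_rowSpace_eq (W : Submodule ℂ (Fin n → ℂ)) {m : ℕ} (h : finrank ℂ W = m) :
    ∃ P : Matrix (Fin m) (Fin n) ℂ, P.rank = m ∧ rowSpace P = W := by
  let β := Module.finBasisOfFinrankEq ℂ W h
  have hP : rowSpace (Matrix.of fun i ↦ (β i : Fin n → ℂ)) = W := by
    rw [rowSpace_eq_range_vecMulLinear, range_vecMulLinear,
      show (Matrix.of fun i ↦ (β i : Fin n → ℂ)).row = W.subtype ∘ β from rfl, Set.range_comp,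
      Submodule.span_image, β.span_eq, Submodule.map_subtype_top]
  exact ⟨_, by rw [← finrank_rowSpace, hP, h], hP⟩

theorem exists_det_mul_mul_ne_zero {m : ℕ} {x : Matrix (Fin a) (Fin n) ℂ} (hx : x.rank = m) :
    ∃ (A : Matrix (Fin m) (Fin a) ℂ) (B : Matrix (Fin n) (Fin m) ℂ), (A * x * B).det ≠ 0 := by
  obtain ⟨R, hR, hRx⟩ := exists_rowSpace_eq (rowSpace x) ((finrank_rowSpace x).trans hx)
  obtain ⟨C, rfl⟩ := exists_eq_mul_of_rowSpace_le hRx.ge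
  have hC : C.rank = m := le_antisymm C.rank_le_width (hx.ge.trans (C.rank_mul_le_left R))
  refine ⟨Cᴴ, Rᴴ, ?_⟩
  rw [show Cᴴ * (C * R) * Rᴴ = (Cᴴ * C) * (R * Rᴴ) by simp only [Matrix.mul_assoc], det_mul]
  refine mul_ne_zero (det_ne_zero_of_rank_eq ?_) (det_ne_zero_of_rank_eq ?_)
  · rw [rank_conjTranspose_mul_self, hC, Fintype.card_fin]
  · rw [rank_self_mul_conjTranspose, hR, Fintype.card_fin]

theorem rowSpace_le_ker_iff {c : ℕ} {P : Matrix (Fin a) (Fin n) ℂ} {y : Matrix (Fin n) (Fin c) ℂ} :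
    rowSpace P ≤ LinearMap.ker yᵀ.mulVecLin ↔ P * y = 0 := by
  rw [rowSpace, LinearMap.range_le_ker_iff, ← mulVecLin_mul, ← transpose_mul, ← toLin'_apply',
    LinearEquiv.map_eq_zero_iff, transpose_eq_zero]

theorem rowSpace_eq_ker_of_mul_eq_zero {c : ℕ} {P : Matrix (Fin a) (Fin n) ℂ}
    {y : Matrix (Fin n) (Fin c) ℂ} (hPy : P * y = 0) (h : n ≤ P.rank + y.rank) :
    P.rank + y.rank = n ∧ rowSpace P = LinearMap.ker yᵀ.mulVecLin := by
  have hsum : P.rank + y.rank = n := by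
    have := rank_add_rank_le_card_of_mul_eq_zero hPy
    rw [Fintype.card_fin] at this
    omega
  refine ⟨hsum, Submodule.eq_of_le_of_finrank_le (rowSpace_le_ker_iff.mpr hPy) ?_⟩
  have := rank_add_finrank_ker_transpose y
  rw [Fintype.card_fin] at this
  rw [finrank_rowSpace]
  omega

end RowSpace

namespace Matrix

variable {R : Type*} [CommRing R] {m n : Type*} [Fintype m] [DecidableEq m] [Fintype n]
  [DecidableEq n]

/-- `det (P B)` times the projector `1 - B (P B)⁻¹ P` onto `ker P` along `range B`; using the
adjugate instead of the inverse makes it polynomial in `P` and `B`. -/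
def complProj (P : Matrix m n R) (B : Matrix n m R) : Matrix n n R :=
  (P * B).det • 1 - B * (P * B).adjugate * P

theorem mul_complProj (P : Matrix m n R) (B : Matrix n m R) : P * complProj P B = 0 := by
  rw [complProj, Matrix.mul_sub, ← Matrix.mul_assoc, ← Matrix.mul_assoc, mul_adjugate,
    Matrix.mul_smul, Matrix.mul_one, Matrix.smul_mul, Matrix.one_mul, sub_self]

theorem complProj_mul (P : Matrix m n R) (B : Matrix n m R) : complProj P B * B = 0 := by
  rw [complProj, Matrix.sub_mul, Matrix.mul_assoc, Matrix.mul_assoc, adjugate_mul,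
    Matrix.mul_smul, Matrix.mul_one, Matrix.smul_mul, Matrix.one_mul, sub_self]

theorem complProj_mul_of_mul_eq_zero {o : Type*} {P : Matrix m n R} (B : Matrix n m R)
    {y : Matrix n o R} (h : P * y = 0) : complProj P B * y = (P * B).det • y := by
  rw [complProj, Matrix.sub_mul, Matrix.mul_assoc, h, Matrix.mul_zero, sub_zero, Matrix.smul_mul,
    Matrix.one_mul]

theorem card_le_rank_complProj {K : Type*} [Field K] {P : Matrix m n K} {B : Matrix n m K}
    (h : (P * B).det ≠ 0) : Fintype.card n ≤ (complProj P B).rank + Fintype.card m := by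
  have hsplit : (P * B).det • (1 : Matrix n n K) = complProj P B + B * (P * B).adjugate * P := by
    rw [complProj, sub_add_cancel]
  calc Fintype.card n = ((P * B).det • (1 : Matrix n n K)).rank := by
        rw [rank_smul_of_mem_nonZeroDivisors, rank_one]
        exact mem_nonZeroDivisors_of_ne_zero h
    _ ≤ (complProj P B).rank + (B * (P * B).adjugate * P).rank := hsplit ▸ rank_add_le _ _
    _ ≤ (complProj P B).rank + Fintype.card m := by
        gcongr
        exact ((B * (P * B).adjugate).rank_mul_le_left P).trans (rank_le_card_width _)

theorem continuous_complProj {X : Type*} [TopologicalSpace X] [TopologicalSpace R]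
    [IsTopologicalRing R] {P : X → Matrix m n R} {B : X → Matrix n m R} (hP : Continuous P)
    (hB : Continuous B) : Continuous fun t ↦ complProj (P t) (B t) := by
  unfold complProj
  fun_prop

end Matrix

section LocalLifts

variable {X Y Z α : Type*} [TopologicalSpace X] [TopologicalSpace Y] [TopologicalSpace α]
  {p : α → Prop}

theorem ContinuousAt.exists_subtype_lift {s : X → α} {x₀ : X} (hs : ContinuousAt s x₀)
    (hp : ∀ᶠ x in 𝓝 x₀, p (s x)) :
    ∃ σ : X → Subtype p, ContinuousAt σ x₀ ∧ ∀ᶠ x in 𝓝 x₀, (σ x : α) = s x := by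
  classical
  let σ : X → Subtype p := fun x ↦ if h : p (s x) then ⟨s x, h⟩ else ⟨s x₀, hp.self_of_nhds⟩
  have hσ : ∀ᶠ x in 𝓝 x₀, (σ x : α) = s x := hp.mono fun x hx ↦ by simp only [σ, dif_pos hx]
  exact ⟨σ, IsInducing.subtypeVal.continuousAt_iff.mpr (hs.congr (hσ.mono fun _ h ↦ h.symm)), hσ⟩

theorem continuous_of_exists_local_lift [TopologicalSpace Z] {q : Subtype p → Z}
    (hq : Continuous q) {f : X → Z}
    (h : ∀ x₀, ∃ s : X → α, ContinuousAt s x₀ ∧ ∀ᶠ x in 𝓝 x₀, ∃ hx : p (s x), q ⟨s x, hx⟩ = f x) :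
    Continuous f := by
  refine continuous_iff_continuousAt.mpr fun x₀ ↦ ?_
  obtain ⟨s, hs, hsf⟩ := h x₀
  obtain ⟨σ, hσ, hσs⟩ := hs.exists_subtype_lift (hsf.mono fun _ ⟨hx, _⟩ ↦ hx)
  refine (hq.continuousAt.comp hσ).congr ?_
  filter_upwards [hsf, hσs] with x ⟨_, hx⟩ hσx
  rw [Function.comp_apply, ← hx]
  exact congrArg q (Subtype.ext hσx)

theorem isOpen_preimage_image_of_exists_local_section {q : Y → Z} {f : Subtype p → Z}
    {U : Set (Subtype p)} (hU : IsOpen U)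
    (h : ∀ y₀, ∀ x ∈ U, q y₀ = f x → ∃ σ : Y → α, ContinuousAt σ y₀ ∧ σ y₀ = x ∧
      ∀ᶠ y in 𝓝 y₀, ∃ hy : p (σ y), f ⟨σ y, hy⟩ = q y) :
    IsOpen (q ⁻¹' (f '' U)) := by
  refine isOpen_iff_mem_nhds.mpr fun y₀ ⟨x, hxU, hxy⟩ ↦ ?_
  obtain ⟨s, hs, hsx, hsf⟩ := h y₀ x hxU hxy.symm
  obtain ⟨σ, hσ, hσs⟩ := hs.exists_subtype_lift (hsf.mono fun _ ⟨hy, _⟩ ↦ hy)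
  have hσ₀ : σ y₀ = x := Subtype.ext (hσs.self_of_nhds.trans hsx)
  filter_upwards [hσ (hσ₀ ▸ hU.mem_nhds hxU), hsf, hσs] with y hyU ⟨_, hy⟩ hσy
  exact ⟨σ y, hyU, by rw [← hy]; exact congrArg f (Subtype.ext hσy)⟩

end LocalLifts

section Grassmannian

variable {n : ℕ}

/-- For `a = m` this is the quotient map `q` defining the topology of `GrassModK n m`. -/
noncomputable def rowSpaceMap (n a m : ℕ) (P : {P : Matrix (Fin a) (Fin n) ℂ // P.rank = m}) :
    GrassModK n m :=
  toGrass m (rowSpace P.1)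

theorem continuous_rowSpaceMap_self (m : ℕ) : Continuous (rowSpaceMap n m m) :=
  continuous_coinduced_rng

theorem rowSpaceMap_mem_grassSet {a m : ℕ} (P : {P : Matrix (Fin a) (Fin n) ℂ // P.rank = m}) :
    rowSpaceMap n a m P ∈ GrassSet n m :=
  (finrank_rowSpace P.1).trans P.2

theorem isOpen_grassSet_of_isOpen_preimage {m : ℕ} {S : Set (GrassModK n m)}
    (hS : IsOpen (rowSpaceMap n m m ⁻¹' S)) : IsOpen (Subtype.val ⁻¹' S : Set (GrassSet n m)) := by
  have hS' : IsOpen (S ∪ (GrassSet n m)ᶜ) := by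
    refine isOpen_coinduced.mpr ?_
    convert hS using 1
    ext P
    show rowSpaceMap n m m P ∈ S ∪ (GrassSet n m)ᶜ ↔ rowSpaceMap n m m P ∈ S
    simp [rowSpaceMap_mem_grassSet P]
  convert hS'.preimage continuous_subtype_val using 1
  ext W
  simp

theorem continuous_rowSpaceMap (a m : ℕ) : Continuous (rowSpaceMap n a m) := by
  refine continuous_of_exists_local_lift (continuous_rowSpaceMap_self m) fun x₀ ↦ ?_
  obtain ⟨A, B, hAB⟩ := exists_det_mul_mul_ne_zero x₀.2
  have hcont : Continuous fun x : {P : Matrix (Fin a) (Fin n) ℂ // P.rank = m} ↦ A * x.1 :=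
    continuous_const.matrix_mul continuous_subtype_val
  refine ⟨fun x ↦ A * x.1, hcont.continuousAt, ?_⟩
  filter_upwards [((hcont.matrix_mul continuous_const).matrix_det.continuousAt).eventually_ne hAB]
    with x hx
  have hrank : (A * x.1).rank = m := by
    refine le_antisymm ((A * x.1).rank_le_height) ?_
    calc m = (A * x.1 * B).rank := by rw [rank_of_det_ne_zero hx, Fintype.card_fin]
      _ ≤ (A * x.1).rank := rank_mul_le_left _ _
  exact ⟨hrank, congrArg (toGrass m) (rowSpace_mul_eq (hrank.trans x.2.symm))⟩

theorem isOpen_preimage_image_rowSpaceMap {a m : ℕ}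
    {U : Set {P : Matrix (Fin a) (Fin n) ℂ // P.rank = m}} (hU : IsOpen U) :
    IsOpen (rowSpaceMap n m m ⁻¹' (rowSpaceMap n a m '' U)) := by
  refine isOpen_preimage_image_of_exists_local_section hU fun Q₀ x _ hQx ↦ ?_
  obtain ⟨C, hC⟩ := exists_eq_mul_of_rowSpace_le (show rowSpace Q₀.1 = rowSpace x.1 from hQx).ge
  have hcont : Continuous fun Q : {P : Matrix (Fin m) (Fin n) ℂ // P.rank = m} ↦ C * Q.1 :=
    continuous_const.matrix_mul continuous_subtype_val
  refine ⟨fun Q ↦ C * Q.1, hcont.continuousAt, hC.symm, ?_⟩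
  filter_upwards [hcont.continuousAt (isOpen_setOf_le_rank m |>.mem_nhds (hC ▸ x.2.ge))]
    with Q hQ
  have hrank : (C * Q.1).rank = m := le_antisymm ((rank_mul_le_right _ _).trans Q.2.le) hQ
  exact ⟨hrank, congrArg (toGrass m) (rowSpace_mul_eq (hrank.trans Q.2.symm))⟩

theorem range_rowSpaceMap_square (m : ℕ) : Set.range (rowSpaceMap n n m) = GrassSet n m := by
  refine (range_subset_iff.mpr rowSpaceMap_mem_grassSet).antisymm fun W hW ↦ ?_
  obtain ⟨P, hP, hPW⟩ := exists_rowSpace_eq W hW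
  have hrank : (Pᴴ * P).rank = m := (rank_conjTranspose_mul_self P).trans hP
  exact ⟨⟨Pᴴ * P, hrank⟩, (rowSpace_mul_eq (hrank.trans hP.symm)).trans hPW⟩

end Grassmannian

section NullSpace

variable {n k : ℕ}

noncomputable def nulMap (n k : ℕ) (x : {x : Mn n // x.rank = k}) : GrassModK n (n - k) :=
  toGrass (n - k) (nul x.1)

theorem finrank_nul {x : Mn n} : finrank ℂ (nul x) = n - x.rank := by
  have := rank_add_finrank_ker_transpose x
  rw [Fintype.card_fin] at this
  rw [nul]
  omega

theorem continuous_nulMap : Continuous (nulMap n k) := by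
  refine continuous_of_exists_local_lift (continuous_rowSpaceMap n (n - k)) fun x₀ ↦ ?_
  obtain ⟨A, B, hAB⟩ := exists_det_mul_mul_ne_zero x₀.2
  have hxB : Continuous fun x : {x : Mn n // x.rank = k} ↦ x.1 * B :=
    continuous_subtype_val.matrix_mul continuous_const
  refine ⟨fun x ↦ complProj A (x.1 * B),
    (continuous_complProj continuous_const hxB).continuousAt, ?_⟩
  filter_upwards [(continuous_const.matrix_mul hxB).matrix_det.continuousAt.eventually_ne
    (by rwa [← Matrix.mul_assoc])] with x hx
  have hrank : (x.1 * B).rank = k := by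
    refine le_antisymm (rank_le_width _) ?_
    calc k = (A * (x.1 * B)).rank := by rw [rank_of_det_ne_zero hx, Fintype.card_fin]
      _ ≤ (x.1 * B).rank := rank_mul_le_right _ _
  have hbound := card_le_rank_complProj hx
  simp only [Fintype.card_fin] at hbound
  obtain ⟨hsum, hker⟩ := rowSpace_eq_ker_of_mul_eq_zero (complProj_mul A (x.1 * B)) (by omega)
  exact ⟨by omega,
    congrArg (toGrass (n - k)) (hker.trans (ker_transpose_mul_eq (hrank.trans x.2.symm)))⟩

theorem range_nulMap (hk : k ≤ n) : Set.range (nulMap n k) = GrassSet n (n - k) := by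
  refine (range_subset_iff.mpr fun x ↦ ?_).antisymm fun W hW ↦ ?_
  · show finrank ℂ (nul x.1) = n - k
    rw [finrank_nul, x.2]
  obtain ⟨P, hP, hPW⟩ := exists_rowSpace_eq W hW
  have hdet : (P * Pᴴ).det ≠ 0 :=
    det_ne_zero_of_rank_eq (by rw [rank_self_mul_conjTranspose, hP, Fintype.card_fin])
  have hbound := card_le_rank_complProj hdet
  simp only [Fintype.card_fin] at hbound
  obtain ⟨hsum, hker⟩ := rowSpace_eq_ker_of_mul_eq_zero (mul_complProj P Pᴴ) (by omega)
  exact ⟨⟨complProj P Pᴴ, by omega⟩, hker.symm.trans hPW⟩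

theorem isOpen_preimage_image_nulMap {U : Set {x : Mn n // x.rank = k}} (hU : IsOpen U) :
    IsOpen (rowSpaceMap n (n - k) (n - k) ⁻¹' (nulMap n k '' U)) := by
  refine isOpen_preimage_image_of_exists_local_section hU fun Q₀ x _ hQx ↦ ?_
  have hQ₀x : Q₀.1 * x.1 = 0 := rowSpace_le_ker_iff.mp (show rowSpace Q₀.1 = nul x.1 from hQx).le
  have hdet : (Q₀.1 * Q₀.1ᴴ).det ≠ 0 :=
    det_ne_zero_of_rank_eq (by rw [rank_self_mul_conjTranspose, Q₀.2, Fintype.card_fin])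
  -- rescaling `x` makes the section pass through `x` at `Q₀`
  set x' := (Q₀.1 * Q₀.1ᴴ).det⁻¹ • x.1
  have hσ : Continuous fun Q : {P : Matrix (Fin (n - k)) (Fin n) ℂ // P.rank = n - k} ↦
      complProj Q.1 Q₀.1ᴴ * x' :=
    (continuous_complProj continuous_subtype_val continuous_const).matrix_mul continuous_const
  have hσ₀ : complProj Q₀.1 Q₀.1ᴴ * x' = x.1 := by
    rw [complProj_mul_of_mul_eq_zero _ (by rw [Matrix.mul_smul, hQ₀x, smul_zero]), smul_smul,
      mul_inv_cancel₀ hdet, one_smul]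
  refine ⟨_, hσ.continuousAt, hσ₀, ?_⟩
  filter_upwards [hσ.continuousAt (isOpen_setOf_le_rank k |>.mem_nhds (hσ₀ ▸ x.2.ge))] with Q hQ
  have hQσ : Q.1 * (complProj Q.1 Q₀.1ᴴ * x') = 0 := by
    rw [← Matrix.mul_assoc, mul_complProj, Matrix.zero_mul]
  have hk : k ≤ n := x.2 ▸ rank_le_width x.1
  replace hQ : k ≤ (complProj Q.1 Q₀.1ᴴ * x').rank := hQ
  obtain ⟨hsum, hker⟩ := rowSpace_eq_ker_of_mul_eq_zero hQσ (by rw [Q.2]; omega)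
  exact ⟨by omega, congrArg (toGrass (n - k)) hker.symm⟩

end NullSpace

theorem stmt_8_general {n k : ℕ} (hk2 : k ≤ n - 1) :
    (Continuous (fun x : {x : Mn n // x.rank = k} => toGrass k (rng x.1)) ∧
     Set.range (fun x : {x : Mn n // x.rank = k} => toGrass k (rng x.1)) = GrassSet n k ∧
     ∀ U : Set {x : Mn n // x.rank = k}, IsOpen U →
       IsOpen (Subtype.val ⁻¹'
         ((fun x : {x : Mn n // x.rank = k} => toGrass k (rng x.1)) '' U) :
           Set ↥(GrassSet n k))) ∧
    (Continuous (fun x : {x : Mn n // x.rank = k} => toGrass (n - k) (nul x.1)) ∧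
     Set.range (fun x : {x : Mn n // x.rank = k} => toGrass (n - k) (nul x.1))
       = GrassSet n (n - k) ∧
     ∀ U : Set {x : Mn n // x.rank = k}, IsOpen U →
       IsOpen (Subtype.val ⁻¹'
         ((fun x : {x : Mn n // x.rank = k} => toGrass (n - k) (nul x.1)) '' U) :
           Set ↥(GrassSet n (n - k)))) :=
  ⟨⟨continuous_rowSpaceMap n k, range_rowSpaceMap_square k,
      fun _ hU ↦ isOpen_grassSet_of_isOpen_preimage (isOpen_preimage_image_rowSpaceMap hU)⟩,
    ⟨continuous_nulMap, range_nulMap (by omega),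
      fun _ hU ↦ isOpen_grassSet_of_isOpen_preimage (isOpen_preimage_image_nulMap hU)⟩⟩

/-- For `1 ≤ k ≤ n - 1`, the maps `Γ_k : D_k → 𝖦_k, x ↦ rng x` and
`Δ_k : D_k → 𝖦_{n-k}, x ↦ nul x` (on the set `D_k` of rank-`k` matrices with the
euclidean subspace topology) are continuous open surjections. -/
theorem stmt_8 {n k : ℕ} (hk1 : 1 ≤ k) (hk2 : k ≤ n - 1) :
    (Continuous (fun x : {x : Mn n // x.rank = k} => toGrass k (rng x.1)) ∧
     Set.range (fun x : {x : Mn n // x.rank = k} => toGrass k (rng x.1)) = GrassSet n k ∧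
     ∀ U : Set {x : Mn n // x.rank = k}, IsOpen U →
       IsOpen (Subtype.val ⁻¹'
         ((fun x : {x : Mn n // x.rank = k} => toGrass k (rng x.1)) '' U) :
           Set ↥(GrassSet n k))) ∧
    (Continuous (fun x : {x : Mn n // x.rank = k} => toGrass (n - k) (nul x.1)) ∧
     Set.range (fun x : {x : Mn n // x.rank = k} => toGrass (n - k) (nul x.1))
       = GrassSet n (n - k) ∧
     ∀ U : Set {x : Mn n // x.rank = k}, IsOpen U →
       IsOpen (Subtype.val ⁻¹'
         ((fun x : {x : Mn n // x.rank = k} => toGrass (n - k) (nul x.1)) '' U) :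
           Set ↥(GrassSet n (n - k)))) :=
  stmt_8_general hk2
end
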